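/- arXiv:1411.2315 — 3 statements merged into one kernel-verified Lean document; each statement's English description precedes it below -/
import Mathlib

section
/- Let ρ_{XE} be a classical-quantum state with classical X and quantum E of finite dimension, and let Φ be a trace-preserving completely positive map acting only on the E system, producing σ_{XE'} = (id_X ⊗ Φ)(ρ_{XE}). Then H_min(X|E)_ρ ≤ H_min(X|E')_σ. -/
open scoped BigOperators ComplexOrder Matrix

/-- Conditional min-entropy `H_min(X|E)` of a cq state given by its blocks
`ρ x = Pr[X = x] · ρ_E^x`:
`max {λ ≥ 0 : ∃ density operator σ_E, ρ_{XE} ≤ 2^{−λ} id_X ⊗ σ_E}`. -/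
noncomputable def condMinEntropy {X E : Type*} [Fintype X] [Fintype E] [DecidableEq E]
    (ρ : X → Matrix E E ℂ) : ℝ :=
  sSup {lam : ℝ | 0 ≤ lam ∧ ∃ σ : Matrix E E ℂ, σ.PosSemidef ∧ σ.trace = 1 ∧
    ∀ x, (((2 : ℝ) ^ (-lam)) • σ - ρ x).PosSemidef}

private lemma psd_trace_nonneg {E : Type*} [Fintype E] [DecidableEq E] {A : Matrix E E ℂ}
    (hA : A.PosSemidef) : 0 ≤ A.trace := by
  refine Finset.sum_nonneg fun i _ => ?_
  exact hA.diag_nonneg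

private lemma psd_sum' {E ι : Type*} [Fintype E] [DecidableEq E]
    (s : Finset ι) (f : ι → Matrix E E ℂ) (hf : ∀ i ∈ s, (f i).PosSemidef) :
    (∑ i ∈ s, f i).PosSemidef := by
  classical
  refine Finset.sum_induction f _ (fun a b ha hb => ha.add hb) ?_ hf
  exact Matrix.PosSemidef.zero

private lemma psd_sum {E ι : Type*} [Fintype E] [DecidableEq E] [Fintype ι]
    (f : ι → Matrix E E ℂ) (hf : ∀ i, (f i).PosSemidef) : (∑ i, f i).PosSemidef :=
  psd_sum' _ f fun i _ => hf i

private lemma channel_psd {E E' ι : Type*} [Fintype E] [DecidableEq E]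
    [Fintype E'] [DecidableEq E'] [Fintype ι] (K : ι → Matrix E' E ℂ)
    {A : Matrix E E ℂ} (hA : A.PosSemidef) : (∑ i, K i * A * (K i)ᴴ).PosSemidef :=
  psd_sum _ fun i => by
    simpa using hA.mul_mul_conjTranspose_same (K i)

private lemma channel_trace {E E' ι : Type*} [Fintype E] [DecidableEq E]
    [Fintype E'] [DecidableEq E'] [Fintype ι] (K : ι → Matrix E' E ℂ)
    (hK : ∑ i, (K i)ᴴ * K i = 1) (A : Matrix E E ℂ) :
    (∑ i, K i * A * (K i)ᴴ).trace = A.trace := by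
  rw [Matrix.trace_sum]
  have : ∀ i, (K i * A * (K i)ᴴ).trace = ((K i)ᴴ * K i * A).trace := fun i => by
    rw [Matrix.trace_mul_cycle]
  simp_rw [this, ← Matrix.trace_sum, ← Finset.sum_mul, hK, one_mul]

/-- Data-processing inequality for conditional min-entropy: applying a quantum channel
(given in Kraus form `A ↦ ∑ i, K i * A * (K i)ᴴ` with `∑ i, (K i)ᴴ * K i = 1`) to the
side information `E` can only increase `H_min(X|E)`. -/
theorem stmt11 {X E E' ι : Type*} [Fintype X] [Fintype E] [DecidableEq E]
    [Fintype E'] [DecidableEq E'] [Fintype ι]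
    (ρ : X → Matrix E E ℂ)
    (hρ : ∀ x, (ρ x).PosSemidef) (htr : ∑ x, (ρ x).trace = 1)
    (K : ι → Matrix E' E ℂ) (hK : ∑ i, (K i)ᴴ * K i = 1) :
    condMinEntropy ρ ≤ condMinEntropy (fun x => ∑ i, K i * ρ x * (K i)ᴴ) := by
  classical
  have hXne : Nonempty X := by
    rcases isEmpty_or_nonempty X with h | h
    · simp at htr
    · exact h
  have hcard : (0:ℝ) < Fintype.card X := by positivity
  -- subset
  have hsub : {lam : ℝ | 0 ≤ lam ∧ ∃ σ : Matrix E E ℂ, σ.PosSemidef ∧ σ.trace = 1 ∧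
        ∀ x, (((2 : ℝ) ^ (-lam)) • σ - ρ x).PosSemidef} ⊆
      {lam : ℝ | 0 ≤ lam ∧ ∃ σ : Matrix E' E' ℂ, σ.PosSemidef ∧ σ.trace = 1 ∧
        ∀ x, (((2 : ℝ) ^ (-lam)) • σ - (∑ i, K i * ρ x * (K i)ᴴ)).PosSemidef} := by
    rintro lam ⟨hlam, σ, hσ, hσtr, hd⟩
    refine ⟨hlam, ∑ i, K i * σ * (K i)ᴴ, channel_psd K hσ, by rw [channel_trace K hK, hσtr], ?_⟩
    intro x
    have key : ((2 : ℝ) ^ (-lam)) • (∑ i, K i * σ * (K i)ᴴ) - (∑ i, K i * ρ x * (K i)ᴴ)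
        = ∑ i, K i * (((2 : ℝ) ^ (-lam)) • σ - ρ x) * (K i)ᴴ := by
      rw [Finset.smul_sum, ← Finset.sum_sub_distrib]
      congr 1; ext i
      rw [Matrix.mul_sub, Matrix.sub_mul, Matrix.mul_smul, Matrix.smul_mul]
    rw [key]
    exact channel_psd K (hd x)
  -- nonempty
  have hne : ({lam : ℝ | 0 ≤ lam ∧ ∃ σ : Matrix E E ℂ, σ.PosSemidef ∧ σ.trace = 1 ∧
      ∀ x, (((2 : ℝ) ^ (-lam)) • σ - ρ x).PosSemidef}).Nonempty := by
    refine ⟨0, le_refl _, ∑ x, ρ x, psd_sum _ hρ, by rw [Matrix.trace_sum, htr], fun x => ?_⟩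
    have : ((2:ℝ) ^ (-(0:ℝ))) • (∑ y, ρ y) - ρ x = ∑ y ∈ Finset.univ.erase x, ρ y := by
      rw [neg_zero, Real.rpow_zero, one_smul,
        ← Finset.add_sum_erase _ _ (Finset.mem_univ x), add_sub_cancel_left]
    rw [this]
    exact psd_sum' _ _ fun y _ => hρ y
  -- bounded above
  have hbdd : BddAbove {lam : ℝ | 0 ≤ lam ∧ ∃ σ : Matrix E' E' ℂ, σ.PosSemidef ∧ σ.trace = 1 ∧
      ∀ x, (((2 : ℝ) ^ (-lam)) • σ - (∑ i, K i * ρ x * (K i)ᴴ)).PosSemidef} := by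
    refine ⟨Real.logb 2 (Fintype.card X), ?_⟩
    rintro lam ⟨hlam, σ, hσ, hσtr, hd⟩
    have hx : ∀ x, ((∑ i, K i * ρ x * (K i)ᴴ)).trace ≤ (((2:ℝ) ^ (-lam) : ℝ) : ℂ) := by
      intro x
      have h0 := psd_trace_nonneg (hd x)
      rw [Matrix.trace_sub, Matrix.trace_smul, hσtr, sub_nonneg] at h0
      simpa [Complex.real_smul] using h0
    have hsum : (1:ℂ) ≤ (Fintype.card X : ℂ) * (((2:ℝ) ^ (-lam) : ℝ) : ℂ) := by
      calc (1:ℂ) = ∑ x, (ρ x).trace := htr.symm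
        _ = ∑ x, ((∑ i, K i * ρ x * (K i)ᴴ)).trace := by
            simp_rw [channel_trace K hK]
        _ ≤ ∑ _x : X, (((2:ℝ) ^ (-lam) : ℝ) : ℂ) := Finset.sum_le_sum fun x _ => hx x
        _ = (Fintype.card X : ℂ) * _ := by rw [Finset.sum_const, nsmul_eq_mul]; norm_num
    have hreal : (1:ℝ) ≤ (Fintype.card X : ℝ) * (2:ℝ) ^ (-lam) := by
      have := hsum
      rw [show ((Fintype.card X : ℂ)) = ((Fintype.card X : ℝ) : ℂ) by norm_num,
        ← Complex.ofReal_mul, ← Complex.ofReal_one, Complex.real_le_real] at this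
      exact this
    have hge : (Fintype.card X : ℝ)⁻¹ ≤ (2:ℝ) ^ (-lam) := by
      rw [inv_le_iff_one_le_mul₀ hcard]
      linarith [hreal, mul_comm ((Fintype.card X : ℝ)) ((2:ℝ) ^ (-lam))]
    have : Real.logb 2 ((Fintype.card X : ℝ)⁻¹) ≤ -lam := by
      rw [← Real.rpow_le_rpow_left_iff (x := 2) one_lt_two,
        Real.rpow_logb (by positivity) (by norm_num)]
      · exact hge
      · positivity
    rw [Real.logb_inv, neg_le_neg_iff] at this
    exact this
  exact csSup_le_csSup hbdd hne hsub
end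

section
/- Let X be an n-bit random variable with min-entropy k. Suppose Bob produces a guess Y for X after receiving b qubits of one-way quantum communication from Alice (who knows X), where Alice and Bob may share arbitrary prior entanglement. Then Pr[Y = X] ≤ 2^{−(k−2b)}. -/
open scoped BigOperators ComplexOrder Matrix
open Matrix Finset

lemma psd_trace_nonneg_s13 {n : Type*} [Fintype n] [DecidableEq n] {G : Matrix n n ℂ}
    (hG : G.PosSemidef) : 0 ≤ G.trace := by
  refine Finset.sum_nonneg fun i _ => ?_
  have := hG.dotProduct_mulVec_nonneg (Pi.single i 1)
  simpa [dotProduct, Matrix.mulVec, Pi.single_apply, Matrix.diag,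
    Finset.mul_sum, ite_mul, mul_ite] using this

open scoped MatrixOrder in
lemma psd_trace_mul_nonneg {n : Type*} [Fintype n] [DecidableEq n] {P Q : Matrix n n ℂ}
    (hP : P.PosSemidef) (hQ : Q.PosSemidef) : 0 ≤ (P * Q).trace := by
  have hS := (CFC.sqrt_nonneg P).posSemidef
  have h1 : (P * Q).trace = ((CFC.sqrt P)ᴴ * Q * CFC.sqrt P).trace := by
    rw [hS.1]
    conv_lhs => rw [← CFC.sqrt_mul_sqrt_self P hP.nonneg]
    rw [Matrix.mul_assoc, Matrix.trace_mul_comm, Matrix.mul_assoc]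
  rw [h1]
  exact psd_trace_nonneg_s13 (hQ.conjTranspose_mul_mul_same _)


lemma dot_sum_sum {ι κ : Type*} [Fintype ι] [Fintype κ] (f g : κ → ι → ℂ) :
    star (∑ m, f m) ⬝ᵥ (∑ m, g m) = ∑ m, ∑ m', star (f m) ⬝ᵥ g m' := by
  have h1 : ∀ z : ι → ℂ, star (∑ m, f m) ⬝ᵥ z = ∑ m, star (f m) ⬝ᵥ z := by
    intro z
    simp only [dotProduct, Pi.star_apply, Finset.sum_apply, star_sum, Finset.sum_mul]
    exact Finset.sum_comm
  have h2 : ∀ y : ι → ℂ, star y ⬝ᵥ (∑ m, g m) = ∑ m, star y ⬝ᵥ g m := by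
    intro y
    simp only [dotProduct, Pi.star_apply, Finset.sum_apply, Finset.mul_sum]
    exact Finset.sum_comm
  rw [h1]
  exact Finset.sum_congr rfl fun m _ => h2 _

section key
variable {M B : Type*} [Fintype M] [DecidableEq M] [Fintype B] [DecidableEq B]

open scoped MatrixOrder in
lemma key_psd (ρ : Matrix (M × B) (M × B) ℂ) (hρ : ρ.PosSemidef)
    (σB : Matrix B B ℂ) (hσ : ∀ i j, σB i j = ∑ m : M, ρ (m, i) (m, j)) :
    ((Fintype.card M : ℂ) •
        (Matrix.of fun p q : M × B => if p.1 = q.1 then σB p.2 q.2 else 0) - ρ).PosSemidef := by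
  set A : Matrix (M × B) (M × B) ℂ :=
    Matrix.of (fun p q : M × B => if p.1 = q.1 then σB p.2 q.2 else 0) with hAdef
  have hσh : ∀ i j, star (σB j i) = σB i j := by
    intro i j
    rw [hσ, hσ, star_sum]
    exact Finset.sum_congr rfl fun m _ => (hρ.1.apply (m, i) (m, j))
  have hAh : A.IsHermitian := by
    ext p q
    simp only [conjTranspose_apply, hAdef, Matrix.of_apply]
    by_cases h : p.1 = q.1
    · rw [if_pos h.symm, if_pos h, hσh]
    · rw [if_neg (fun hh => h hh.symm), if_neg h, star_zero]
  have hherm : ((Fintype.card M : ℂ) • A - ρ).IsHermitian := by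
    have h1 : ((Fintype.card M : ℂ) • A).IsHermitian := by
      unfold Matrix.IsHermitian
      rw [conjTranspose_smul, hAh, star_natCast]
    exact h1.sub hρ.1
  have him : ∀ v : (M × B) → ℂ, (star v ⬝ᵥ (((Fintype.card M : ℂ) • A - ρ) *ᵥ v)).im = 0 := by
    intro v
    have h : star (star v ⬝ᵥ (((Fintype.card M : ℂ) • A - ρ) *ᵥ v))
        = star v ⬝ᵥ (((Fintype.card M : ℂ) • A - ρ) *ᵥ v) := by
      conv_lhs => rw [star_dotProduct, star_star, star_mulVec, hherm]
      rw [dotProduct_mulVec, dotProduct_comm]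
    rw [Complex.star_def] at h
    exact Complex.conj_eq_iff_im.mp h
  refine PosSemidef.of_dotProduct_mulVec_nonneg hherm fun v => ?_
  set S := CFC.sqrt ρ with hSdef
  have hSS : S * S = ρ := CFC.sqrt_mul_sqrt_self ρ hρ.nonneg
  have hSh : S.IsHermitian := (CFC.sqrt_nonneg ρ).posSemidef.1
  set u : M → (M × B) → ℂ := fun m p => if p.1 = m then v p else 0 with hu
  set vv : M → B → ℂ := fun m i => v (m, i) with hvv
  have hbil : ∀ y z : (M × B) → ℂ, star y ⬝ᵥ (ρ *ᵥ z) = star (S *ᵥ y) ⬝ᵥ (S *ᵥ z) := by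
    intro y z
    rw [star_mulVec, hSh, ← dotProduct_mulVec, mulVec_mulVec, hSS]
  set w : M → (M × B) → ℂ := fun m => S *ᵥ u m with hw
  have hv : v = ∑ m, u m := by
    funext p
    simp [hu, Finset.sum_apply, Finset.sum_ite_eq]
  have hwsum : S *ᵥ v = ∑ m, w m := by
    conv_lhs => rw [hv, ← Matrix.mulVecLin_apply, map_sum]
    simp [hw, Matrix.mulVecLin_apply]
  have hexp : star v ⬝ᵥ (ρ *ᵥ v) = ∑ m : M, ∑ m' : M, star (w m) ⬝ᵥ (w m') := by
    rw [hbil, hwsum, dot_sum_sum]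
  -- the norms
  set q : M → ℝ := fun m => ∑ p, Complex.normSq (w m p) with hq
  have hq0 : ∀ m, 0 ≤ q m := fun m => Finset.sum_nonneg fun p _ => Complex.normSq_nonneg _
  have hqeq : ∀ m, star (w m) ⬝ᵥ w m = ((q m : ℝ) : ℂ) := by
    intro m
    rw [dotProduct, hq]
    push_cast
    exact Finset.sum_congr rfl fun p _ => by
      rw [Pi.star_apply, Complex.star_def, ← Complex.normSq_eq_conj_mul_self]
  -- Cauchy-Schwarz for each pair
  have hcs : ∀ m m' : M, (star (w m) ⬝ᵥ (w m')).re ≤ Real.sqrt (q m) * Real.sqrt (q m') := by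
    intro m m'
    have h1 : (star (w m) ⬝ᵥ (w m')).re = ∑ p, (star (w m p) * w m' p).re := by
      rw [dotProduct, Complex.re_sum]
      exact Finset.sum_congr rfl fun p _ => rfl
    rw [h1]
    calc ∑ p, (star (w m p) * w m' p).re
        ≤ ∑ p, ‖w m p‖ * ‖w m' p‖ := by
          refine Finset.sum_le_sum fun p _ => (Complex.re_le_norm _).trans ?_
          rw [norm_mul, Complex.star_def, Complex.norm_conj]
      _ ≤ Real.sqrt (∑ p, ‖w m p‖ ^ 2) * Real.sqrt (∑ p, ‖w m' p‖ ^ 2) :=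
          Real.sum_mul_le_sqrt_mul_sqrt _ _ _
      _ = Real.sqrt (q m) * Real.sqrt (q m') := by
          rw [hq]; congr 1 <;> · congr 1; exact Finset.sum_congr rfl fun p _ => Complex.sq_norm _
  -- step 1 : re (v ρ v) ≤ card * Σ q
  have hstep1 : (star v ⬝ᵥ (ρ *ᵥ v)).re ≤ (Fintype.card M : ℝ) * ∑ m, q m := by
    rw [hexp]
    calc (∑ m : M, ∑ m' : M, star (w m) ⬝ᵥ (w m')).re
        = ∑ m : M, ∑ m' : M, (star (w m) ⬝ᵥ (w m')).re := by
          rw [Complex.re_sum]; exact Finset.sum_congr rfl fun m _ => Complex.re_sum _ _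
      _ ≤ ∑ m : M, ∑ m' : M, Real.sqrt (q m) * Real.sqrt (q m') :=
          Finset.sum_le_sum fun m _ => Finset.sum_le_sum fun m' _ => hcs m m'
      _ = (∑ m, Real.sqrt (q m)) ^ 2 := by rw [sq, Finset.sum_mul_sum]
      _ ≤ (Fintype.card M : ℝ) * ∑ m, Real.sqrt (q m) ^ 2 := by
          simpa using sq_sum_le_card_mul_sum_sq (s := (univ : Finset M))
            (f := fun m => Real.sqrt (q m))
      _ = (Fintype.card M : ℝ) * ∑ m, q m := by
          congr 1; exact Finset.sum_congr rfl fun m _ => Real.sq_sqrt (hq0 m)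
  -- blocks
  set blk : M → Matrix B B ℂ := fun m => ρ.submatrix (fun i : B => (m, i)) (fun j : B => (m, j)) with hblk
  have hblkpsd : ∀ m, (blk m).PosSemidef := fun m => hρ.submatrix _
  have hqu : ∀ m, star (u m) ⬝ᵥ (ρ *ᵥ u m) = star (vv m) ⬝ᵥ ((blk m) *ᵥ (vv m)) := by
    intro m
    simp only [dotProduct, mulVec, Pi.star_apply, hu, hvv, hblk, submatrix_apply,
      Fintype.sum_prod_type]
    rw [Finset.sum_eq_single m ?h1 ?h2]
    case h1 => intro m1 _ hne; simp [hne]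
    case h2 => simp
    refine Finset.sum_congr rfl fun i _ => ?_
    simp only [if_pos rfl]
    congr 1
    rw [Finset.sum_eq_single m ?h3 ?h4]
    case h3 => intro m2 _ hne; simp [hne]
    case h4 => simp
    simp
  have hqblk : ∀ m, q m = (star (vv m) ⬝ᵥ ((blk m) *ᵥ (vv m))).re := by
    intro m
    have h : (star (vv m) ⬝ᵥ ((blk m) *ᵥ (vv m))) = ((q m : ℝ) : ℂ) := by
      rw [← hqu, hbil, hqeq]
    rw [h, Complex.ofReal_re]
  have hσmat : σB = ∑ m', blk m' := by
    ext i j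
    simp [hσ, hblk, Matrix.sum_apply, submatrix_apply]
  have hform : ∀ m, star (vv m) ⬝ᵥ (σB *ᵥ vv m) = ∑ m', star (vv m) ⬝ᵥ ((blk m') *ᵥ vv m) := by
    intro m
    have h1 : σB *ᵥ vv m = ∑ m', blk m' *ᵥ vv m := by
      funext j
      rw [hσmat]
      simp only [mulVec, dotProduct, Finset.sum_apply, Matrix.sum_apply, Finset.sum_mul]
      exact Finset.sum_comm
    rw [h1]
    simp only [dotProduct, Finset.sum_apply, Finset.mul_sum]
    exact Finset.sum_comm
  have hAform : star v ⬝ᵥ (A *ᵥ v) = ∑ m, star (vv m) ⬝ᵥ (σB *ᵥ vv m) := by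
    simp only [dotProduct, mulVec, hAdef, Matrix.of_apply, Pi.star_apply, hvv,
      Fintype.sum_prod_type]
    refine Finset.sum_congr rfl fun m _ => Finset.sum_congr rfl fun i _ => ?_
    congr 1
    rw [Finset.sum_eq_single m ?h5 ?h6]
    case h5 => intro m' _ hne; simp [Ne.symm hne]
    case h6 => simp
    simp
  have hstep2 : ∀ m, q m ≤ (star (vv m) ⬝ᵥ (σB *ᵥ vv m)).re := by
    intro m
    rw [hform m, Complex.re_sum]
    refine (le_of_eq (hqblk m)).trans ?_
    exact Finset.single_le_sum (f := fun m' => (star (vv m) ⬝ᵥ ((blk m') *ᵥ vv m)).re)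
      (fun m' _ => by simpa using (hblkpsd m').re_dotProduct_nonneg (vv m)) (Finset.mem_univ m)
  rw [Complex.le_def]
  refine ⟨?_, (him v).symm⟩
  have hre : (star v ⬝ᵥ (((Fintype.card M : ℂ) • A - ρ) *ᵥ v)).re
      = (Fintype.card M : ℝ) * (star v ⬝ᵥ (A *ᵥ v)).re - (star v ⬝ᵥ (ρ *ᵥ v)).re := by
    rw [sub_mulVec, dotProduct_sub, smul_mulVec, dotProduct_smul]
    simp [Complex.sub_re, Complex.mul_re]
  rw [hre, Complex.zero_re]
  have h3 : (star v ⬝ᵥ (A *ᵥ v)).re = ∑ m, (star (vv m) ⬝ᵥ (σB *ᵥ vv m)).re := by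
    rw [hAform, Complex.re_sum]
  have h4 : ∑ m, q m ≤ (star v ⬝ᵥ (A *ᵥ v)).re := by
    rw [h3]; exact Finset.sum_le_sum fun m _ => hstep2 m
  have hcard : (0:ℝ) ≤ (Fintype.card M : ℝ) := Nat.cast_nonneg _
  nlinarith [mul_le_mul_of_nonneg_left h4 hcard, hstep1]
end key


/-- Nayak–Salzman bound with shared entanglement: if `X` is an `n`-bit random variable
with min-entropy `k` (i.e. `Pr[X = x] ≤ 2^{−k}`), Alice sends `b` qubits (a system `M`
of dimension `2^b`) to Bob, who also holds his half `B` of a prior entangled state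
(whose reduced state `σ_B` is independent of `x`), and Bob measures a POVM `{F x}` to
produce a guess, then `Pr[Y = X] ≤ 2^{−(k−2b)}`. -/
theorem stmt13 {α M B : Type*} [Fintype α] [Fintype M] [DecidableEq M]
    [Fintype B] [DecidableEq B]
    (b : ℕ) (hM : Fintype.card M = 2 ^ b) (k : ℝ)
    (p : α → ℝ) (hp : ∀ x, 0 ≤ p x) (hps : ∑ x, p x = 1)
    (hk : ∀ x, p x ≤ (2 : ℝ) ^ (-k))
    (ρ : α → Matrix (M × B) (M × B) ℂ)
    (hρ : ∀ x, (ρ x).PosSemidef) (hρt : ∀ x, (ρ x).trace = 1)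
    (σB : Matrix B B ℂ)
    (hBfixed : ∀ x, (Matrix.of fun i j : B => ∑ m : M, ρ x (m, i) (m, j)) = σB)
    (F : α → Matrix (M × B) (M × B) ℂ)
    (hF : ∀ x, (F x).PosSemidef) (hFsum : ∑ x, F x = 1) :
    ∑ x, p x * ((ρ x * F x).trace.re) ≤ (2 : ℝ) ^ (-(k - 2 * b)) := by
  classical
  have hrpow : (2 : ℝ) ^ (-(k - 2 * b)) = (2 : ℝ) ^ (-k) * ((Fintype.card M : ℝ)) ^ 2 := by
    rw [hM]
    push_cast
    rw [show -(k - 2 * (b:ℝ)) = -k + 2 * b by ring, Real.rpow_add two_pos]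
    congr 1
    rw [show ((2:ℝ)^b)^2 = 2^(2*b : ℕ) by rw [← pow_mul, mul_comm], ← Real.rpow_natCast 2 (2*b)]
    push_cast
    ring_nf
  rcases isEmpty_or_nonempty α with hα | hα
  · rw [Finset.univ_eq_empty, Finset.sum_empty]
    positivity
  obtain ⟨x₀⟩ := hα
  have hσ : ∀ (x : α) (i j : B), σB i j = ∑ m : M, ρ x (m, i) (m, j) := by
    intro x i j; rw [← hBfixed x]; rfl
  set A : Matrix (M × B) (M × B) ℂ :=
    Matrix.of (fun p q : M × B => if p.1 = q.1 then σB p.2 q.2 else 0) with hAdef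
  set AA : Matrix (M × B) (M × B) ℂ := (Fintype.card M : ℂ) • A with hAA
  have hkey : ∀ x, (AA - ρ x).PosSemidef := fun x => key_psd (ρ x) (hρ x) σB (hσ x)
  have hAApsd : AA.PosSemidef := by
    have := (hkey x₀).add (hρ x₀)
    rwa [sub_add_cancel] at this
  -- trace of σB
  have hσtr : σB.trace = 1 := by
    rw [← hρt x₀]
    rw [Matrix.trace, Matrix.trace]
    simp only [Matrix.diag]
    rw [Fintype.sum_prod_type]
    rw [Finset.sum_comm]
    exact Finset.sum_congr rfl fun i _ => (hσ x₀ i i).symm ▸ rfl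
  have hAAtr : AA.trace = ((Fintype.card M : ℂ)) ^ 2 := by
    rw [hAA, Matrix.trace_smul]
    rw [show A.trace = (Fintype.card M : ℂ) * σB.trace by
      rw [Matrix.trace, Matrix.trace]
      simp only [Matrix.diag, hAdef, Matrix.of_apply]
      rw [Fintype.sum_prod_type]
      simp [Finset.mul_sum]]
    rw [hσtr, mul_one, smul_eq_mul, sq]
  -- per-x bounds
  have hper : ∀ x, p x * ((ρ x * F x).trace.re) ≤ (2:ℝ)^(-k) * ((AA * F x).trace.re) := by
    intro x
    have h1 : 0 ≤ ((AA - ρ x) * F x).trace := psd_trace_mul_nonneg (hkey x) (hF x)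
    have h2 : (ρ x * F x).trace.re ≤ (AA * F x).trace.re := by
      have : ((AA - ρ x) * F x).trace = (AA * F x).trace - (ρ x * F x).trace := by
        rw [Matrix.sub_mul, Matrix.trace_sub]
      rw [this] at h1
      have := (Complex.le_def.mp h1).1
      simp only [Complex.zero_re, Complex.sub_re] at this
      linarith
    have h3 : 0 ≤ (ρ x * F x).trace.re := by
      have := (Complex.le_def.mp (psd_trace_mul_nonneg (hρ x) (hF x))).1
      simpa using this
    have h4 : 0 ≤ (AA * F x).trace.re := le_trans h3 h2
    calc p x * ((ρ x * F x).trace.re) ≤ p x * ((AA * F x).trace.re) :=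
          mul_le_mul_of_nonneg_left h2 (hp x)
      _ ≤ (2:ℝ)^(-k) * ((AA * F x).trace.re) := mul_le_mul_of_nonneg_right (hk x) h4
  calc ∑ x, p x * ((ρ x * F x).trace.re) ≤ ∑ x, (2:ℝ)^(-k) * ((AA * F x).trace.re) :=
        Finset.sum_le_sum fun x _ => hper x
    _ = (2:ℝ)^(-k) * (∑ x, (AA * F x).trace).re := by
        rw [← Finset.mul_sum, Complex.re_sum]
    _ = (2:ℝ)^(-k) * ((Fintype.card M : ℝ)) ^ 2 := by
        congr 1
        rw [show ∑ x, (AA * F x).trace = (AA * ∑ x, F x).trace by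
          rw [Finset.mul_sum, Matrix.trace_sum], hFsum, Matrix.mul_one, hAAtr]
        norm_cast
    _ = (2 : ℝ) ^ (-(k - 2 * b)) := hrpow.symm
end

section
/- Let Z be a random variable on {0,1}^m and E a quantum system of dimension 2^d jointly in a cq-state ρ_{ZE}. Then the squared trace distance of ρ_{ZE} from U_m ⊗ ρ_E is at most 2^{min(d,m)} times the sum over all nonempty subsets S of [m] of the squared trace distance of ρ_{Z_{⊕S} E} from U_1 ⊗ ρ_E, where Z_{⊕S} = ⊕_{i∈S} Z_i. -/
open scoped BigOperators ComplexOrder Matrix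

/-- Trace norm of a (square complex) matrix: the sum of its singular values. -/
noncomputable def traceNorm {E : Type*} [Fintype E] [DecidableEq E]
    (A : Matrix E E ℂ) : ℝ :=
  ∑ i, Real.sqrt ((Matrix.posSemidef_conjTranspose_mul_self A).1.eigenvalues i)

/-- The block-diagonal matrix of a cq state given by classical value `a ↦` block `ρ a`. -/
noncomputable def cqMatrix {α E : Type*} [DecidableEq α]
    (ρ : α → Matrix E E ℂ) : Matrix (α × E) (α × E) ℂ :=
  Matrix.of fun p q => if p.1 = q.1 then ρ p.1 p.2 q.2 else 0

/-- The XOR `⊕_{i ∈ S} z_i` of the bits of `z` indexed by `S`. -/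
def parS {m : ℕ} (S : Finset (Fin m)) (z : Fin m → Bool) : Bool :=
  decide ((S.filter fun i => z i = true).card % 2 = 1)


section PosSemidefSqrt
open scoped MatrixOrder

variable {E : Type*} [Fintype E] [DecidableEq E]

/-- The PSD square root, via the spectral decomposition. -/
noncomputable def Matrix.PosSemidef.sqrt {P : Matrix E E ℂ} (hP : P.PosSemidef) : Matrix E E ℂ :=
  (hP.1.eigenvectorUnitary : Matrix E E ℂ)
    * Matrix.diagonal (((↑) : ℝ → ℂ) ∘ (Real.sqrt ·) ∘ hP.1.eigenvalues)
    * (star (hP.1.eigenvectorUnitary : Matrix E E ℂ))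

lemma Matrix.PosSemidef.posSemidef_sqrt {P : Matrix E E ℂ} (hP : P.PosSemidef) :
    hP.sqrt.PosSemidef := by
  have hd : (Matrix.diagonal (((↑) : ℝ → ℂ) ∘ (Real.sqrt ·) ∘ hP.1.eigenvalues)).PosSemidef :=
    Matrix.posSemidef_diagonal_iff.mpr fun i =>
      Complex.zero_le_real.mpr (Real.sqrt_nonneg _)
  simpa [Matrix.PosSemidef.sqrt, Matrix.star_eq_conjTranspose] using
    hd.mul_mul_conjTranspose_same (hP.1.eigenvectorUnitary : Matrix E E ℂ)

lemma Matrix.PosSemidef.sqrt_mul_self {P : Matrix E E ℂ} (hP : P.PosSemidef) :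
    hP.sqrt * hP.sqrt = P := by
  have hU : (star (hP.1.eigenvectorUnitary : Matrix E E ℂ)) * (hP.1.eigenvectorUnitary : Matrix E E ℂ) = 1 :=
    (Matrix.mem_unitaryGroup_iff').mp hP.1.eigenvectorUnitary.2
  conv_rhs => rw [hP.1.spectral_theorem, Unitary.conjStarAlgAut_apply]
  unfold Matrix.PosSemidef.sqrt
  calc _ = (hP.1.eigenvectorUnitary : Matrix E E ℂ)
        * (Matrix.diagonal (((↑) : ℝ → ℂ) ∘ (Real.sqrt ·) ∘ hP.1.eigenvalues)
          * ((star (hP.1.eigenvectorUnitary : Matrix E E ℂ)) * (hP.1.eigenvectorUnitary : Matrix E E ℂ))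
          * Matrix.diagonal (((↑) : ℝ → ℂ) ∘ (Real.sqrt ·) ∘ hP.1.eigenvalues))
        * (star (hP.1.eigenvectorUnitary : Matrix E E ℂ)) := by simp only [Matrix.mul_assoc]
    _ = _ := by
      rw [hU, Matrix.mul_one, Matrix.diagonal_mul_diagonal]
      have h' : ∀ i, ((Real.sqrt (hP.1.eigenvalues i) : ℝ) : ℂ)
          * ((Real.sqrt (hP.1.eigenvalues i) : ℝ) : ℂ) = ((hP.1.eigenvalues i : ℝ) : ℂ) :=
        fun i => by rw [← Complex.ofReal_mul, Real.mul_self_sqrt (hP.eigenvalues_nonneg i)]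
      congr 2
      congr 1
      funext i
      exact h' i

lemma Matrix.PosSemidef.sq_sqrt {P : Matrix E E ℂ} (hP : P.PosSemidef) :
    hP.sqrt ^ 2 = P := by
  rw [sq, hP.sqrt_mul_self]

lemma Matrix.PosSemidef.eq_sqrt_of_sq_eq {Q P : Matrix E E ℂ} (hQ : Q.PosSemidef)
    (hP : P.PosSemidef) (h : Q ^ 2 = P) : Q = hP.sqrt := by
  have h1 : CFC.sqrt P = hP.sqrt :=
    (CFC.sqrt_eq_iff P hP.sqrt hP.nonneg hP.posSemidef_sqrt.nonneg).mpr hP.sqrt_mul_self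
  have h2 : CFC.sqrt P = Q :=
    (CFC.sqrt_eq_iff P Q hP.nonneg hQ.nonneg).mpr (by rw [← sq]; exact h)
  rw [← h1, h2]

lemma Matrix.posSemidef_iff_eq_transpose_mul_self {A : Matrix E E ℂ} :
    A.PosSemidef ↔ ∃ B : Matrix E E ℂ, A = Bᴴ * B :=
  ⟨fun h => ⟨h.sqrt, by rw [h.posSemidef_sqrt.1.eq, h.sqrt_mul_self]⟩,
    fun ⟨B, hB⟩ => hB ▸ Matrix.posSemidef_conjTranspose_mul_self B⟩

end PosSemidefSqrt

section QXorAux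
open Matrix
set_option linter.unusedSectionVars false

variable {E : Type*} [Fintype E] [DecidableEq E]

lemma traceNorm_nonneg (A : Matrix E E ℂ) : 0 ≤ traceNorm A :=
  Finset.sum_nonneg fun _ _ => Real.sqrt_nonneg _

/-- trace of the PSD sqrt equals sum of sqrt of eigenvalues -/
lemma trace_sqrt_eq {P : Matrix E E ℂ} (hP : P.PosSemidef) :
    (hP.sqrt).trace = ((∑ i, Real.sqrt (hP.1.eigenvalues i) : ℝ) : ℂ) := by
  rw [Matrix.PosSemidef.sqrt, Matrix.trace_mul_cycle,
    (Matrix.mem_unitaryGroup_iff').mp (Matrix.IsHermitian.eigenvectorUnitary hP.1).2,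
    one_mul, Matrix.trace_diagonal]
  push_cast
  rfl

lemma traceNorm_eq_trace_sqrt (A : Matrix E E ℂ) :
    (traceNorm A : ℂ) = ((Matrix.posSemidef_conjTranspose_mul_self A).sqrt).trace := by
  rw [trace_sqrt_eq, traceNorm]

/-- master lemma: any PSD `Q` with `Q ^ 2 = AᴴA` computes the trace norm. -/
lemma traceNorm_eq_of_sq {A Q : Matrix E E ℂ} (hQ : Q.PosSemidef)
    (h : Q ^ 2 = Aᴴ * A) : (traceNorm A : ℂ) = Q.trace := by
  rw [traceNorm_eq_trace_sqrt, ← hQ.eq_sqrt_of_sq_eq (Matrix.posSemidef_conjTranspose_mul_self A) h]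

example : True := trivial

lemma traceNorm_congr {A B : Matrix E E ℂ} (h : Aᴴ * A = Bᴴ * B) :
    traceNorm A = traceNorm B := by
  have hB := Matrix.posSemidef_conjTranspose_mul_self B
  have h1 := traceNorm_eq_of_sq (A := A) hB.posSemidef_sqrt (by rw [hB.sq_sqrt]; exact h.symm)
  have h2 := traceNorm_eq_trace_sqrt B
  exact_mod_cast h1.trans h2.symm

lemma traceNorm_neg (A : Matrix E E ℂ) : traceNorm (-A) = traceNorm A :=
  traceNorm_congr (by simp)

lemma traceNorm_zero : traceNorm (0 : Matrix E E ℂ) = 0 := by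
  have := traceNorm_eq_of_sq (A := (0 : Matrix E E ℂ)) (Q := 0)
    Matrix.PosSemidef.zero (by simp)
  simpa using this

lemma posSemidef_real_smul {P : Matrix E E ℂ} (hP : P.PosSemidef) {r : ℝ} (hr : 0 ≤ r) :
    ((r : ℂ) • P).PosSemidef := by
  constructor
  · rw [Matrix.IsHermitian, Matrix.conjTranspose_smul, hP.1.eq]
    norm_num
  · intro x
    exact (hP.smul (Complex.zero_le_real.mpr hr)).2 x

lemma traceNorm_smul (r : ℝ) (A : Matrix E E ℂ) :
    traceNorm ((r : ℂ) • A) = |r| * traceNorm A := by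
  have hP : (Aᴴ * A).PosSemidef := Matrix.posSemidef_conjTranspose_mul_self A
  have hQ : (((|r| : ℝ) : ℂ) • hP.sqrt).PosSemidef :=
    posSemidef_real_smul hP.posSemidef_sqrt (abs_nonneg r)
  have hsq : (((|r| : ℝ) : ℂ) • hP.sqrt) ^ 2 = ((r : ℂ) • A)ᴴ * ((r : ℂ) • A) := by
    rw [smul_pow, hP.sq_sqrt, Matrix.conjTranspose_smul, Matrix.smul_mul, Matrix.mul_smul,
      smul_smul]
    congr 1
    rw [Complex.star_def, Complex.conj_ofReal, ← Complex.ofReal_pow, ← Complex.ofReal_mul,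
      sq_abs, ← sq]
  have := traceNorm_eq_of_sq hQ hsq
  rw [Matrix.trace_smul, smul_eq_mul, ← traceNorm_eq_trace_sqrt] at this
  exact_mod_cast this

lemma posSemidef_blockDiagonal {α : Type*} [Fintype α] [DecidableEq α]
    {g : α → Matrix E E ℂ} (hg : ∀ a, (g a).PosSemidef) :
    (Matrix.blockDiagonal g).PosSemidef := by
  classical
  choose C hC using fun a => (Matrix.posSemidef_iff_eq_transpose_mul_self).mp (hg a)
  rw [Matrix.posSemidef_iff_eq_transpose_mul_self]
  refine ⟨Matrix.blockDiagonal C, ?_⟩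
  rw [Matrix.blockDiagonal_conjTranspose, ← Matrix.blockDiagonal_mul]
  exact congrArg Matrix.blockDiagonal (funext fun a => hC a)

lemma traceNorm_blockDiagonal {α : Type*} [Fintype α] [DecidableEq α]
    (f : α → Matrix E E ℂ) :
    traceNorm (Matrix.blockDiagonal f) = ∑ a, traceNorm (f a) := by
  classical
  have hpsd : ∀ a, ((f a)ᴴ * (f a)).PosSemidef :=
    fun a => Matrix.posSemidef_conjTranspose_mul_self (f a)
  have hQ : (Matrix.blockDiagonal fun a => (hpsd a).sqrt).PosSemidef :=
    posSemidef_blockDiagonal fun a => (hpsd a).posSemidef_sqrt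
  have hsq : (Matrix.blockDiagonal fun a => (hpsd a).sqrt) ^ 2
      = (Matrix.blockDiagonal f)ᴴ * Matrix.blockDiagonal f := by
    rw [sq, ← Matrix.blockDiagonal_mul, Matrix.blockDiagonal_conjTranspose,
      ← Matrix.blockDiagonal_mul]
    exact congrArg Matrix.blockDiagonal (funext fun a => by rw [← sq, (hpsd a).sq_sqrt])
  have := traceNorm_eq_of_sq hQ hsq
  rw [Matrix.trace_blockDiagonal] at this
  have h2 : ∀ a ∈ Finset.univ, ((hpsd a).sqrt).trace = ((traceNorm (f a) : ℝ) : ℂ) :=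
    fun a _ => (traceNorm_eq_trace_sqrt (f a)).symm
  rw [Finset.sum_congr rfl h2, ← Complex.ofReal_sum] at this
  exact_mod_cast this

set_option linter.unusedSectionVars false

lemma traceNorm_submatrix {F : Type*} [Fintype F] [DecidableEq F]
    (M : Matrix E E ℂ) (e : F ≃ E) :
    traceNorm (M.submatrix e e) = traceNorm M := by
  have hP : (Mᴴ * M).PosSemidef := Matrix.posSemidef_conjTranspose_mul_self M
  have hQ : ((hP.sqrt).submatrix e e).PosSemidef := hP.posSemidef_sqrt.submatrix e
  have hsq : ((hP.sqrt).submatrix e e) ^ 2 = (M.submatrix e e)ᴴ * (M.submatrix e e) := by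
    rw [sq, Matrix.submatrix_mul_equiv, hP.sqrt_mul_self, Matrix.conjTranspose_submatrix,
      Matrix.submatrix_mul_equiv]
  have := traceNorm_eq_of_sq hQ hsq
  have htr : ((hP.sqrt).submatrix e e).trace = (hP.sqrt).trace := by
    simp only [Matrix.trace, Matrix.diag, Matrix.submatrix_apply]
    exact e.sum_comp fun j => hP.sqrt j j
  rw [htr, ← traceNorm_eq_trace_sqrt] at this
  exact_mod_cast this

/-- trace of `U * diagonal (ofReal ∘ g) * star U` for unitary `U`. -/
private lemma trace_unitary_conj_diag (U : Matrix.unitaryGroup E ℂ) (g : E → ℝ) :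
    ((U : Matrix E E ℂ) * Matrix.diagonal (RCLike.ofReal ∘ g) * (star U : Matrix E E ℂ)).trace
      = ((∑ i, g i : ℝ) : ℂ) := by
  rw [Matrix.trace_mul_cycle,
    show (star U : Matrix E E ℂ) * (U : Matrix E E ℂ) = 1 from
      (Matrix.mem_unitaryGroup_iff').mp U.2, one_mul, Matrix.trace_diagonal]
  push_cast
  rfl

private lemma unitary_conj_diag_sq (U : Matrix.unitaryGroup E ℂ) (g : E → ℝ) :
    ((U : Matrix E E ℂ) * Matrix.diagonal (RCLike.ofReal ∘ g) * (star U : Matrix E E ℂ)) ^ 2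
      = (U : Matrix E E ℂ) * Matrix.diagonal (RCLike.ofReal ∘ fun i => (g i) ^ 2)
          * (star U : Matrix E E ℂ) := by
  have hU : (star U : Matrix E E ℂ) * (U : Matrix E E ℂ) = 1 :=
    (Matrix.mem_unitaryGroup_iff').mp U.2
  rw [sq]
  calc (U : Matrix E E ℂ) * Matrix.diagonal (RCLike.ofReal ∘ g) * (star U : Matrix E E ℂ)
        * ((U : Matrix E E ℂ) * Matrix.diagonal (RCLike.ofReal ∘ g) * (star U : Matrix E E ℂ))
      = (U : Matrix E E ℂ) * (Matrix.diagonal (RCLike.ofReal ∘ g) *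
          ((star U : Matrix E E ℂ) * (U : Matrix E E ℂ)) * Matrix.diagonal (RCLike.ofReal ∘ g))
          * (star U : Matrix E E ℂ) := by
        simp only [Matrix.mul_assoc]
    _ = (U : Matrix E E ℂ) * Matrix.diagonal (RCLike.ofReal ∘ fun i => (g i) ^ 2)
          * (star U : Matrix E E ℂ) := by
        rw [hU, Matrix.mul_one, Matrix.diagonal_mul_diagonal]
        have hfun : (fun i => (RCLike.ofReal ∘ g) i * (RCLike.ofReal ∘ g) i : E → ℂ)
            = (RCLike.ofReal ∘ fun i => g i ^ 2) := by
          funext i; simp [Function.comp, sq]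
        rw [hfun]

/-- For a Hermitian matrix, the trace norm is the sum of the absolute values of eigenvalues. -/
lemma traceNorm_hermitian {A : Matrix E E ℂ} (hA : A.IsHermitian) :
    traceNorm A = ∑ i, |hA.eigenvalues i| := by
  set U := Matrix.IsHermitian.eigenvectorUnitary hA with hUdef
  have hspec := Matrix.IsHermitian.spectral_theorem hA
  have hQpsd : ((U : Matrix E E ℂ) * Matrix.diagonal (RCLike.ofReal ∘ fun i => |hA.eigenvalues i|)
      * (star U : Matrix E E ℂ)).PosSemidef := by
    have hd : (Matrix.diagonal (RCLike.ofReal ∘ fun i => |hA.eigenvalues i|)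
        : Matrix E E ℂ).PosSemidef :=
      Matrix.posSemidef_diagonal_iff.mpr fun i =>
        Complex.zero_le_real.mpr (abs_nonneg _)
    simpa [Matrix.star_eq_conjTranspose] using hd.mul_mul_conjTranspose_same (U : Matrix E E ℂ)
  have hsq : ((U : Matrix E E ℂ) * Matrix.diagonal (RCLike.ofReal ∘ fun i => |hA.eigenvalues i|)
      * (star U : Matrix E E ℂ)) ^ 2 = Aᴴ * A := by
    rw [unitary_conj_diag_sq, hA.eq]
    conv_rhs => rw [hspec, Unitary.conjStarAlgAut_apply]
    rw [show ((U : Matrix E E ℂ) * Matrix.diagonal (RCLike.ofReal ∘ hA.eigenvalues)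
        * (star U : Matrix E E ℂ)) * ((U : Matrix E E ℂ)
        * Matrix.diagonal (RCLike.ofReal ∘ hA.eigenvalues) * (star U : Matrix E E ℂ))
      = ((U : Matrix E E ℂ) * Matrix.diagonal (RCLike.ofReal ∘ hA.eigenvalues)
        * (star U : Matrix E E ℂ)) ^ 2 from (sq _).symm, unitary_conj_diag_sq]
    congr 2
    funext i
    simp [sq_abs]
  have := traceNorm_eq_of_sq hQpsd hsq
  rw [trace_unitary_conj_diag] at this
  exact_mod_cast this

/-- trace of a Hermitian matrix is the sum of its eigenvalues. -/
lemma trace_hermitian {A : Matrix E E ℂ} (hA : A.IsHermitian) :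
    A.trace = ((∑ i, hA.eigenvalues i : ℝ) : ℂ) := by
  conv_lhs => rw [Matrix.IsHermitian.spectral_theorem hA, Unitary.conjStarAlgAut_apply]
  exact trace_unitary_conj_diag _ _

noncomputable def frobSq (A : Matrix E E ℂ) : ℝ :=
  ∑ i, ((Matrix.posSemidef_conjTranspose_mul_self A).1.eigenvalues i)

lemma frobSq_eq_trace (A : Matrix E E ℂ) : ((frobSq A : ℝ) : ℂ) = (Aᴴ * A).trace :=
  (trace_hermitian (Matrix.posSemidef_conjTranspose_mul_self A).1).symm

lemma frobSq_le_sq_traceNorm (A : Matrix E E ℂ) : frobSq A ≤ (traceNorm A) ^ 2 := by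
  rw [frobSq, traceNorm]
  have h := Finset.sum_sq_le_sq_sum_of_nonneg
    (s := (Finset.univ : Finset E))
    (f := fun i => Real.sqrt ((Matrix.posSemidef_conjTranspose_mul_self A).1.eigenvalues i))
    (fun i _ => Real.sqrt_nonneg _)
  calc ∑ i, (Matrix.posSemidef_conjTranspose_mul_self A).1.eigenvalues i
      = ∑ i, (Real.sqrt ((Matrix.posSemidef_conjTranspose_mul_self A).1.eigenvalues i)) ^ 2 :=
        Finset.sum_congr rfl fun i _ => (Real.sq_sqrt
          ((Matrix.posSemidef_conjTranspose_mul_self A).eigenvalues_nonneg i)).symm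
    _ ≤ _ := h

lemma sq_traceNorm_le_card_mul_frobSq (A : Matrix E E ℂ) :
    (traceNorm A) ^ 2 ≤ (Fintype.card E) * frobSq A := by
  rw [frobSq, traceNorm]
  have h := sq_sum_le_card_mul_sum_sq
    (s := (Finset.univ : Finset E))
    (f := fun i => Real.sqrt ((Matrix.posSemidef_conjTranspose_mul_self A).1.eigenvalues i))
  calc (∑ i, Real.sqrt ((Matrix.posSemidef_conjTranspose_mul_self A).1.eigenvalues i)) ^ 2
      ≤ (Finset.univ : Finset E).card *
          ∑ i, (Real.sqrt ((Matrix.posSemidef_conjTranspose_mul_self A).1.eigenvalues i)) ^ 2 := h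
    _ = (Fintype.card E) * ∑ i, (Matrix.posSemidef_conjTranspose_mul_self A).1.eigenvalues i := by
        rw [Finset.card_univ]
        congr 1
        exact Finset.sum_congr rfl fun i _ => Real.sq_sqrt
          ((Matrix.posSemidef_conjTranspose_mul_self A).eigenvalues_nonneg i)

private lemma trace_unitary_conj_diagC (U : Matrix.unitaryGroup E ℂ) (g : E → ℂ) :
    ((U : Matrix E E ℂ) * Matrix.diagonal g * (star U : Matrix E E ℂ)).trace = ∑ i, g i := by
  rw [Matrix.trace_mul_cycle,
    show (star U : Matrix E E ℂ) * (U : Matrix E E ℂ) = 1 from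
      (Matrix.mem_unitaryGroup_iff').mp U.2, one_mul, Matrix.trace_diagonal]

private lemma unitary_conj_mul (U : Matrix.unitaryGroup E ℂ) (X Y : Matrix E E ℂ) :
    ((U : Matrix E E ℂ) * X * (star U : Matrix E E ℂ))
      * ((U : Matrix E E ℂ) * Y * (star U : Matrix E E ℂ))
      = (U : Matrix E E ℂ) * (X * Y) * (star U : Matrix E E ℂ) := by
  have hU : (star U : Matrix E E ℂ) * (U : Matrix E E ℂ) = 1 :=
    (Matrix.mem_unitaryGroup_iff').mp U.2
  calc ((U : Matrix E E ℂ) * X * (star U : Matrix E E ℂ))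
      * ((U : Matrix E E ℂ) * Y * (star U : Matrix E E ℂ))
      = (U : Matrix E E ℂ) * (X * ((star U : Matrix E E ℂ) * (U : Matrix E E ℂ)) * Y)
        * (star U : Matrix E E ℂ) := by simp only [Matrix.mul_assoc]
    _ = _ := by rw [hU, Matrix.mul_one]

private lemma trace_mul_diagonal (M : Matrix E E ℂ) (d : E → ℂ) :
    (M * Matrix.diagonal d).trace = ∑ i, M i i * d i := by
  simp [Matrix.trace, Matrix.diag, Matrix.mul_apply, Matrix.diagonal_apply, Finset.sum_ite_eq]

/-- For Hermitian `A` there is a unitary `W` with `tr (W A) = ‖A‖₁`. -/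
lemma exists_unitary_trace_eq {A : Matrix E E ℂ} (hA : A.IsHermitian) :
    ∃ W : Matrix.unitaryGroup E ℂ,
      ((W : Matrix E E ℂ) * A).trace = ((traceNorm A : ℝ) : ℂ) := by
  classical
  set U := Matrix.IsHermitian.eigenvectorUnitary hA
  set s : E → ℂ := fun i => if hA.eigenvalues i < 0 then -1 else 1 with hs
  have hsunit : Matrix.diagonal s ∈ Matrix.unitaryGroup E ℂ := by
    rw [Matrix.mem_unitaryGroup_iff, Matrix.star_eq_conjTranspose,
      Matrix.diagonal_conjTranspose, Matrix.diagonal_mul_diagonal]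
    convert Matrix.diagonal_one with i
    by_cases h : hA.eigenvalues i < 0 <;> simp [hs, h, Pi.star_apply]
  set Wg : Matrix.unitaryGroup E ℂ := U * ⟨Matrix.diagonal s, hsunit⟩ * star U with hWg
  refine ⟨Wg, ?_⟩
  have hWmat : (Wg : Matrix E E ℂ)
      = (U : Matrix E E ℂ) * Matrix.diagonal s * (star U : Matrix E E ℂ) := rfl
  have hAm := Matrix.IsHermitian.spectral_theorem hA
  rw [hWmat]
  conv_lhs => rw [hAm, Unitary.conjStarAlgAut_apply]
  rw [unitary_conj_mul, Matrix.diagonal_mul_diagonal, trace_unitary_conj_diagC,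
    traceNorm_hermitian hA]
  push_cast
  refine Finset.sum_congr rfl fun i _ => ?_
  by_cases h : hA.eigenvalues i < 0
  · simp [hs, h, Function.comp, abs_of_neg h]
  · simp [hs, h, Function.comp, abs_of_nonneg (not_lt.mp h)]

/-- Diagonal entries of a unitary matrix have real part at most one in absolute value. -/
lemma re_diag_unitary_le {V : Matrix E E ℂ} (hV : V ∈ Matrix.unitaryGroup E ℂ) (i : E) :
    |(V i i).re| ≤ 1 := by
  have h1 : (V * Vᴴ) i i = 1 := by
    rw [← Matrix.star_eq_conjTranspose, (Matrix.mem_unitaryGroup_iff).mp hV]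
    simp
  have h2 : ∑ j, Complex.normSq (V i j) = 1 := by
    have he : (V * Vᴴ) i i = ∑ j, V i j * (starRingEnd ℂ) (V i j) := by
      simp [Matrix.mul_apply, Matrix.conjTranspose_apply]
    rw [he] at h1
    have := congrArg Complex.re h1
    simpa [Complex.mul_conj] using this
  have h3 : Complex.normSq (V i i) ≤ 1 := by
    rw [← h2]
    exact Finset.single_le_sum (fun j _ => Complex.normSq_nonneg _) (Finset.mem_univ i)
  calc |(V i i).re| ≤ ‖V i i‖ := Complex.abs_re_le_norm _
    _ = Real.sqrt (Complex.normSq (V i i)) := by rw [Complex.norm_def]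
    _ ≤ Real.sqrt 1 := Real.sqrt_le_sqrt h3
    _ = 1 := Real.sqrt_one

lemma re_trace_unitary_mul_le {A : Matrix E E ℂ} (hA : A.IsHermitian)
    (W : Matrix.unitaryGroup E ℂ) :
    (((W : Matrix E E ℂ) * A).trace).re ≤ traceNorm A := by
  classical
  set U := Matrix.IsHermitian.eigenvectorUnitary hA
  have hAm := Matrix.IsHermitian.spectral_theorem hA
  set V : Matrix.unitaryGroup E ℂ := star U * W * U with hVdef
  have hVmat : (V : Matrix E E ℂ)
      = (star U : Matrix E E ℂ) * (W : Matrix E E ℂ) * (U : Matrix E E ℂ) := rfl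
  have htr : ((W : Matrix E E ℂ) * A).trace
      = ∑ i, (V : Matrix E E ℂ) i i * ((hA.eigenvalues i : ℝ) : ℂ) := by
    conv_lhs => rw [hAm, Unitary.conjStarAlgAut_apply]
    rw [show (W : Matrix E E ℂ) * ((U : Matrix E E ℂ)
          * Matrix.diagonal (RCLike.ofReal ∘ hA.eigenvalues) * (star U : Matrix E E ℂ))
        = ((W : Matrix E E ℂ) * (U : Matrix E E ℂ)
            * Matrix.diagonal (RCLike.ofReal ∘ hA.eigenvalues)) * (star U : Matrix E E ℂ) by
      simp only [Matrix.mul_assoc]]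
    rw [Matrix.trace_mul_comm]
    rw [show (star U : Matrix E E ℂ) * ((W : Matrix E E ℂ) * (U : Matrix E E ℂ)
          * Matrix.diagonal (RCLike.ofReal ∘ hA.eigenvalues))
        = ((star U : Matrix E E ℂ) * (W : Matrix E E ℂ) * (U : Matrix E E ℂ))
            * Matrix.diagonal (RCLike.ofReal ∘ hA.eigenvalues) by
      simp only [Matrix.mul_assoc]]
    rw [← hVmat, trace_mul_diagonal]
    rfl
  rw [htr, traceNorm_hermitian hA, Complex.re_sum]
  refine Finset.sum_le_sum fun i _ => ?_
  have hre : ((V : Matrix E E ℂ) i i * ((hA.eigenvalues i : ℝ) : ℂ)).re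
      = ((V : Matrix E E ℂ) i i).re * hA.eigenvalues i := by
    simp [Complex.mul_re]
  rw [hre]
  calc ((V : Matrix E E ℂ) i i).re * hA.eigenvalues i
      ≤ |((V : Matrix E E ℂ) i i).re * hA.eigenvalues i| := le_abs_self _
    _ = |((V : Matrix E E ℂ) i i).re| * |hA.eigenvalues i| := abs_mul _ _
    _ ≤ 1 * |hA.eigenvalues i| :=
        mul_le_mul_of_nonneg_right (re_diag_unitary_le V.2 i) (abs_nonneg _)
    _ = |hA.eigenvalues i| := one_mul _

/-- Triangle inequality for the trace norm of Hermitian matrices. -/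
lemma traceNorm_add_le {A B : Matrix E E ℂ} (hA : A.IsHermitian) (hB : B.IsHermitian) :
    traceNorm (A + B) ≤ traceNorm A + traceNorm B := by
  obtain ⟨W, hW⟩ := exists_unitary_trace_eq (hA.add hB)
  have h1 : traceNorm (A + B) = (((W : Matrix E E ℂ) * (A + B)).trace).re := by
    rw [hW]; simp
  rw [h1, Matrix.mul_add, Matrix.trace_add, Complex.add_re]
  exact add_le_add (re_trace_unitary_mul_le hA W) (re_trace_unitary_mul_le hB W)

lemma isHermitian_sum {ι : Type*} (s : Finset ι) (f : ι → Matrix E E ℂ)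
    (hf : ∀ i ∈ s, (f i).IsHermitian) : (∑ i ∈ s, f i).IsHermitian := by
  rw [Matrix.IsHermitian, Matrix.conjTranspose_sum]
  exact Finset.sum_congr rfl fun i hi => (hf i hi).eq

/-- Triangle inequality for finite sums of Hermitian matrices. -/
lemma traceNorm_sum_le {ι : Type*} (s : Finset ι) (f : ι → Matrix E E ℂ)
    (hf : ∀ i ∈ s, (f i).IsHermitian) :
    traceNorm (∑ i ∈ s, f i) ≤ ∑ i ∈ s, traceNorm (f i) := by
  classical
  induction s using Finset.induction_on with
  | empty => simp [traceNorm_zero]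
  | insert a t hx ih =>
    rw [Finset.sum_insert hx, Finset.sum_insert hx]
    refine le_trans (traceNorm_add_le (hf a (Finset.mem_insert_self a t))
      (isHermitian_sum t f fun i hi => hf i (Finset.mem_insert_of_mem hi))) ?_
    exact add_le_add_right (ih fun i hi => hf i (Finset.mem_insert_of_mem hi)) _

open scoped symmDiff

noncomputable section FourierScalars

variable {m : ℕ}

/-- The real-valued character `(-1)^{⊕_{i∈S} z_i}`. -/
def chi (S : Finset (Fin m)) (z : Fin m → Bool) : ℝ := if parS S z then -1 else 1

lemma chi_eq_prod (S : Finset (Fin m)) (z : Fin m → Bool) :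
    chi S z = ∏ i ∈ S, (if z i then (-1 : ℝ) else 1) := by
  classical
  rw [Finset.prod_ite, Finset.prod_const, Finset.prod_const, one_pow, mul_one]
  rw [chi, parS]
  by_cases h : (S.filter fun i => z i = true).card % 2 = 1
  · rw [if_pos (by simpa using h), Odd.neg_one_pow (Nat.odd_iff.mpr h)]
  · rw [if_neg (by simpa using h),
      Even.neg_one_pow (Nat.even_iff.mpr (by omega))]

lemma chi_abs (S : Finset (Fin m)) (z : Fin m → Bool) : |chi S z| = 1 := by
  rw [chi]; by_cases h : parS S z <;> simp [h]

lemma chi_empty (z : Fin m → Bool) : chi (∅ : Finset (Fin m)) z = 1 := by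
  simp [chi_eq_prod]

/-- factorization of a sum over all bit strings of a product over coordinates -/
lemma sum_prod_bool (h : Fin m → Bool → ℝ) :
    ∑ z : Fin m → Bool, ∏ i, h i (z i) = ∏ i, ∑ b, h i b := by
  classical
  rw [Finset.prod_univ_sum, Fintype.piFinset_univ]

set_option maxHeartbeats 1000000 in
lemma sum_chi (U : Finset (Fin m)) :
    ∑ z : Fin m → Bool, chi U z = if U = ∅ then (2 ^ m : ℝ) else 0 := by
  classical
  have h1 : ∀ z, chi U z = ∏ i, (if i ∈ U then (if z i then (-1 : ℝ) else 1) else 1) := by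
    intro z
    rw [chi_eq_prod]
    rw [Finset.prod_ite_mem Finset.univ U fun i => if z i then (-1 : ℝ) else 1,
      Finset.univ_inter]
  calc ∑ z : Fin m → Bool, chi U z
      = ∑ z : Fin m → Bool, ∏ i, (if i ∈ U then (if z i then (-1 : ℝ) else 1) else 1) :=
        Finset.sum_congr rfl fun z _ => h1 z
    _ = ∏ i, ∑ b : Bool, (if i ∈ U then (if b then (-1 : ℝ) else 1) else 1) :=
        sum_prod_bool (fun i b => if i ∈ U then (if b then (-1 : ℝ) else 1) else 1)
    _ = ∏ i : Fin m, (if i ∈ U then (0 : ℝ) else 2) := by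
        refine Finset.prod_congr rfl fun i _ => ?_
        by_cases h : i ∈ U <;> simp [h, Fintype.sum_bool] <;> norm_num
    _ = if U = ∅ then (2 ^ m : ℝ) else 0 := by
        by_cases h : U = ∅
        · simp [h, Finset.card_univ]
        · obtain ⟨i, hi⟩ := Finset.nonempty_iff_ne_empty.mpr h
          rw [if_neg h]
          exact Finset.prod_eq_zero (Finset.mem_univ i) (by simp [hi])

lemma chi_mul_chi (S T : Finset (Fin m)) (z : Fin m → Bool) :
    chi S z * chi T z = chi (S ∆ T) z := by
  classical
  simp only [chi_eq_prod]
  have hsq : ∀ (W : Finset (Fin m)), (∏ i ∈ W, (if z i then (-1 : ℝ) else 1)) ^ 2 = 1 := by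
    intro W
    rw [← Finset.prod_pow]
    refine Finset.prod_eq_one fun i _ => ?_
    by_cases h : z i <;> simp [h]
  have hu : S ∪ T = (S ∆ T) ∪ (S ∩ T) := by
    ext i
    simp only [Finset.mem_union, Finset.mem_inter, Finset.mem_symmDiff]
    tauto
  have hdisj : Disjoint (S ∆ T) (S ∩ T) := by
    rw [Finset.disjoint_left]
    intro i hi him
    rw [Finset.mem_symmDiff] at hi
    rw [Finset.mem_inter] at him
    tauto
  calc (∏ i ∈ S, (if z i then (-1 : ℝ) else 1)) * ∏ i ∈ T, (if z i then (-1 : ℝ) else 1)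
      = (∏ i ∈ S ∪ T, (if z i then (-1 : ℝ) else 1))
        * ∏ i ∈ S ∩ T, (if z i then (-1 : ℝ) else 1) := (Finset.prod_union_inter).symm
    _ = ((∏ i ∈ S ∆ T, (if z i then (-1 : ℝ) else 1))
          * ∏ i ∈ S ∩ T, (if z i then (-1 : ℝ) else 1))
        * ∏ i ∈ S ∩ T, (if z i then (-1 : ℝ) else 1) := by
        rw [hu, Finset.prod_union hdisj]
    _ = (∏ i ∈ S ∆ T, (if z i then (-1 : ℝ) else 1))
          * (∏ i ∈ S ∩ T, (if z i then (-1 : ℝ) else 1)) ^ 2 := by ring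
    _ = ∏ i ∈ S ∆ T, (if z i then (-1 : ℝ) else 1) := by rw [hsq, mul_one]

lemma sum_chi_mul_chi (S T : Finset (Fin m)) :
    ∑ z : Fin m → Bool, chi S z * chi T z = if S = T then (2 ^ m : ℝ) else 0 := by
  classical
  rw [Finset.sum_congr rfl fun z _ => chi_mul_chi S T z, sum_chi]
  by_cases h : S = T
  · subst h
    simp [symmDiff_self, Finset.bot_eq_empty]
  · rw [if_neg, if_neg h]
    intro hc
    exact h (symmDiff_eq_bot.mp (by rw [hc]; exact Finset.bot_eq_empty.symm))

lemma sum_chi_over_sets (z w : Fin m → Bool) :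
    ∑ S ∈ (Finset.univ : Finset (Fin m)).powerset, chi S z * chi S w
      = if z = w then (2 ^ m : ℝ) else 0 := by
  classical
  have h1 : ∀ S, chi S z * chi S w
      = ∏ i ∈ S, ((if z i then (-1 : ℝ) else 1) * (if w i then (-1 : ℝ) else 1)) := by
    intro S
    rw [chi_eq_prod, chi_eq_prod, Finset.prod_mul_distrib]
  set c : Fin m → ℝ := fun i => (if z i then (-1 : ℝ) else 1) * (if w i then (-1 : ℝ) else 1)
    with hc
  have hcval : ∀ i, c i = if z i = w i then (1 : ℝ) else -1 := by
    intro i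
    cases hz : z i <;> cases hw : w i <;> simp [hc, hz, hw]
  have h2 : ∏ i, (c i + 1) = ∑ S ∈ (Finset.univ : Finset (Fin m)).powerset, ∏ i ∈ S, c i := by
    rw [Finset.prod_add]
    exact Finset.sum_congr rfl fun S hS => by simp
  calc ∑ S ∈ (Finset.univ : Finset (Fin m)).powerset, chi S z * chi S w
      = ∑ S ∈ (Finset.univ : Finset (Fin m)).powerset, ∏ i ∈ S, c i :=
        Finset.sum_congr rfl fun S _ => h1 S
    _ = ∏ i, (c i + 1) := h2.symm
    _ = if z = w then (2 ^ m : ℝ) else 0 := by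
        by_cases h : z = w
        · subst h
          rw [if_pos rfl]
          rw [Finset.prod_congr rfl fun i _ => by rw [hcval i, if_pos rfl]]
          simp [Finset.card_univ]
          norm_num
        · obtain ⟨i, hi⟩ := Function.ne_iff.mp h
          rw [if_neg h]
          refine Finset.prod_eq_zero (Finset.mem_univ i) ?_
          rw [hcval i, if_neg hi]
          norm_num

end FourierScalars

section cq

variable {α : Type*} [Fintype α] [DecidableEq α]

lemma cqMatrix_sub (f g : α → Matrix E E ℂ) :
    cqMatrix f - cqMatrix g = cqMatrix (fun a => f a - g a) := by
  ext ⟨a, e⟩ ⟨a', e'⟩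
  by_cases h : a = a' <;> simp [cqMatrix, h]

lemma cqMatrix_eq_submatrix (f : α → Matrix E E ℂ) :
    cqMatrix f = (Matrix.blockDiagonal f).submatrix
      (Equiv.prodComm α E) (Equiv.prodComm α E) := by
  ext ⟨a, e⟩ ⟨a', e'⟩
  by_cases h : a = a' <;> simp [cqMatrix, Matrix.blockDiagonal_apply, h]

lemma traceNorm_cqMatrix (f : α → Matrix E E ℂ) :
    traceNorm (cqMatrix f) = ∑ a, traceNorm (f a) := by
  rw [cqMatrix_eq_submatrix, traceNorm_submatrix, traceNorm_blockDiagonal]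

end cq

lemma real_smul_matrix (r : ℝ) (A : Matrix E E ℂ) : r • A = (r : ℂ) • A := by
  ext i j
  simp [Complex.real_smul]

lemma isHermitian_real_smul {A : Matrix E E ℂ} (r : ℝ) (hA : A.IsHermitian) :
    ((r : ℂ) • A).IsHermitian := by
  rw [Matrix.IsHermitian, Matrix.conjTranspose_smul, hA.eq]
  congr 1
  simp [Complex.star_def, Complex.conj_ofReal]

lemma frobSq_nonneg (A : Matrix E E ℂ) : 0 ≤ frobSq A :=
  Finset.sum_nonneg fun i _ =>
    (Matrix.posSemidef_conjTranspose_mul_self A).eigenvalues_nonneg i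


end QXorAux

/-- Quantum XOR lemma against quantum side information: for a cq state `ρ_{ZE}` with
`Z ∈ {0,1}^m` and `dim E = 2^d`,
`‖ρ_{ZE} − U_m ⊗ ρ_E‖² ≤ 2^{min(d,m)} ∑_{∅ ≠ S ⊆ [m]} ‖ρ_{Z_{⊕S}E} − U₁ ⊗ ρ_E‖²`. -/
theorem stmt14 {E : Type*} [Fintype E] [DecidableEq E] (m d : ℕ)
    (hE : Fintype.card E = 2 ^ d)
    (ρ : (Fin m → Bool) → Matrix E E ℂ)
    (hρ : ∀ z, (ρ z).PosSemidef) (htr : ∑ z, (ρ z).trace = 1) :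
    (traceNorm (cqMatrix ρ - cqMatrix (fun _ => ((1 : ℝ) / 2 ^ m) • ∑ z, ρ z)) / 2) ^ 2
      ≤ (2 : ℝ) ^ (min d m) *
        ∑ S ∈ Finset.univ.powerset.filter (fun S : Finset (Fin m) => S.Nonempty),
          (traceNorm
              (cqMatrix (fun b : Bool =>
                  ∑ z ∈ Finset.univ.filter (fun z => parS S z = b), ρ z)
                - cqMatrix (fun _ : Bool => ((1 : ℝ) / 2) • ∑ z, ρ z)) / 2) ^ 2 := by
  classical
  set σ : Matrix E E ℂ := ∑ z, ρ z with hσdef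
  set P : Finset (Finset (Fin m)) :=
    Finset.univ.powerset.filter (fun S : Finset (Fin m) => S.Nonempty) with hPdef
  set DS : Finset (Fin m) → Matrix E E ℂ := fun S => ∑ z, (chi S z : ℂ) • ρ z with hDSdef
  set Del : (Fin m → Bool) → Matrix E E ℂ := fun z => ρ z - ((1 : ℝ) / 2 ^ m) • σ with hDeldef
  have hherm : ∀ z, (ρ z).IsHermitian := fun z => (hρ z).1
  have hσherm : σ.IsHermitian := isHermitian_sum _ _ fun z _ => hherm z
  have hDSherm : ∀ S, (DS S).IsHermitian := fun S =>
    isHermitian_sum _ _ fun z _ => isHermitian_real_smul _ (hherm z)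
  have hDelherm : ∀ z, (Del z).IsHermitian := fun z =>
    (hherm z).sub (by rw [real_smul_matrix]; exact isHermitian_real_smul _ hσherm)
  -- LHS rewrite
  have hL : traceNorm (cqMatrix ρ - cqMatrix (fun _ => ((1 : ℝ) / 2 ^ m) • σ))
      = ∑ z, traceNorm (Del z) := by
    rw [cqMatrix_sub, traceNorm_cqMatrix]
  -- the blocks of the RHS cq matrices
  have hsplitDS : ∀ S : Finset (Fin m), DS S
      = (∑ z ∈ Finset.univ.filter (fun z => parS S z = false), ρ z)
        - ∑ z ∈ Finset.univ.filter (fun z => parS S z = true), ρ z := by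
    intro S
    simp only [hDSdef]
    rw [← Finset.sum_filter_add_sum_filter_not Finset.univ (fun z => parS S z = false)
      (fun z => (chi S z : ℂ) • ρ z)]
    have hf1 : ∀ z ∈ Finset.univ.filter (fun z => parS S z = false),
        (chi S z : ℂ) • ρ z = ρ z := by
      intro z hz
      rw [Finset.mem_filter] at hz
      rw [chi, hz.2]
      simp
    have hne : Finset.univ.filter (fun z => ¬ parS S z = false)
        = Finset.univ.filter (fun z => parS S z = true) := by
      refine Finset.filter_congr fun z _ => ?_
      simp
    have hf2 : ∀ z ∈ Finset.univ.filter (fun z => parS S z = true),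
        (chi S z : ℂ) • ρ z = - ρ z := by
      intro z hz
      rw [Finset.mem_filter] at hz
      rw [chi, hz.2]
      simp
    rw [Finset.sum_congr rfl hf1, hne, Finset.sum_congr rfl hf2, Finset.sum_neg_distrib]
    abel
  have hsplitσ : ∀ S : Finset (Fin m), σ
      = (∑ z ∈ Finset.univ.filter (fun z => parS S z = false), ρ z)
        + ∑ z ∈ Finset.univ.filter (fun z => parS S z = true), ρ z := by
    intro S
    rw [hσdef, ← Finset.sum_filter_add_sum_filter_not Finset.univ
      (fun z => parS S z = false) ρ]
    congr 1
    refine Finset.sum_congr (Finset.filter_congr fun z _ => by simp) fun _ _ => rfl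
  have hblock : ∀ (S : Finset (Fin m)) (b : Bool),
      (∑ z ∈ Finset.univ.filter (fun z => parS S z = b), ρ z) - ((1 : ℝ) / 2) • σ
        = ((if b then (-1 : ℝ) else 1) / 2) • DS S := by
    intro S b
    cases b
    · rw [hsplitDS S]
      conv_lhs => rw [hsplitσ S]
      simp only [Bool.false_eq_true, if_false]
      module
    · rw [hsplitDS S]
      conv_lhs => rw [hsplitσ S]
      simp only [if_pos]
      module
  have hRS : ∀ S : Finset (Fin m),
      traceNorm (cqMatrix (fun b : Bool =>
          ∑ z ∈ Finset.univ.filter (fun z => parS S z = b), ρ z)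
        - cqMatrix (fun _ : Bool => ((1 : ℝ) / 2) • σ)) = traceNorm (DS S) := by
    intro S
    rw [cqMatrix_sub, traceNorm_cqMatrix, Fintype.sum_bool, hblock S true, hblock S false,
      real_smul_matrix, real_smul_matrix, traceNorm_smul, traceNorm_smul]
    simp only [if_true, Bool.false_eq_true, if_false, abs_div, abs_neg, abs_one, abs_two]
    ring
  -- Fourier inversion
  have hDSempty : DS ∅ = σ := by
    simp only [hDSdef, hσdef]
    refine Finset.sum_congr rfl fun z _ => ?_
    rw [chi_empty]
    simp
  have hfull : ∀ z, ∑ S ∈ Finset.univ.powerset, (chi S z : ℂ) • DS S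
      = ((2 : ℝ) ^ m : ℂ) • ρ z := by
    intro z
    have h1 : ∀ S, (chi S z : ℂ) • DS S
        = ∑ w, ((chi S z * chi S w : ℝ) : ℂ) • ρ w := by
      intro S
      simp only [hDSdef, Finset.smul_sum, smul_smul]
      refine Finset.sum_congr rfl fun w _ => ?_
      congr 1
      push_cast
      ring
    rw [Finset.sum_congr rfl fun S _ => h1 S, Finset.sum_comm]
    have h2 : ∀ w, ∑ S ∈ Finset.univ.powerset, ((chi S z * chi S w : ℝ) : ℂ) • ρ w
        = ((if z = w then ((2:ℝ)^m : ℝ) else 0 : ℝ) : ℂ) • ρ w := by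
      intro w
      rw [← Finset.sum_smul]
      congr 1
      rw [← Complex.ofReal_sum, sum_chi_over_sets z w]
    rw [Finset.sum_congr rfl fun w _ => h2 w]
    rw [Finset.sum_eq_single z]
    · simp
    · intro w _ hw
      rw [if_neg fun h => hw h.symm]
      simp
    · intro h
      exact absurd (Finset.mem_univ z) h
  have hinv : ∀ z, Del z
      = ((1 : ℝ) / 2 ^ m) • ∑ S ∈ P, (chi S z : ℂ) • DS S := by
    intro z
    have hsplitP : ∑ S ∈ Finset.univ.powerset, (chi S z : ℂ) • DS S
        = (∑ S ∈ P, (chi S z : ℂ) • DS S) + σ := by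
      rw [← Finset.sum_filter_add_sum_filter_not Finset.univ.powerset
        (fun S : Finset (Fin m) => S.Nonempty) (fun S => (chi S z : ℂ) • DS S)]
      congr 1
      have hone : Finset.univ.powerset.filter
          (fun S : Finset (Fin m) => ¬ S.Nonempty) = {∅} := by
        ext S
        simp [Finset.nonempty_iff_ne_empty]
      rw [hone, Finset.sum_singleton, chi_empty, hDSempty]
      simp
    have hPsum : ∑ S ∈ P, (chi S z : ℂ) • DS S = ((2:ℝ)^m : ℂ) • ρ z - σ := by
      rw [eq_sub_iff_add_eq, ← hsplitP, hfull]
    rw [hDeldef]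
    simp only [hPsum]
    rw [real_smul_matrix, real_smul_matrix]
    have h2m : ((2:ℂ))^m ≠ 0 := by positivity
    match_scalars <;> push_cast <;> field_simp
  -- Parseval
  have hone : ∀ z, ((Del z)ᴴ * Del z).trace
      = ((((1:ℝ)/2^m : ℝ) : ℂ))^2 * ∑ S ∈ P, ∑ S' ∈ P,
          ((chi S z : ℂ) * (chi S' z : ℂ)) * ((DS S')ᴴ * DS S).trace := by
    intro z
    rw [hinv z, real_smul_matrix]
    rw [Matrix.conjTranspose_smul, Matrix.smul_mul, Matrix.mul_smul, smul_smul,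
      Matrix.trace_smul, Matrix.conjTranspose_sum]
    simp only [Matrix.conjTranspose_smul, Matrix.sum_mul, Matrix.mul_sum, Matrix.smul_mul,
      Matrix.mul_smul, smul_smul, Matrix.trace_sum, Matrix.trace_smul, smul_eq_mul,
      Complex.star_def, Complex.conj_ofReal, Finset.mul_sum]
    rw [sq]
    refine Finset.sum_congr rfl fun S _ => Finset.sum_congr rfl fun S' _ => ?_
    ring
  have htwo : ∑ z, ((Del z)ᴴ * Del z).trace
      = (((1:ℝ)/2^m : ℝ) : ℂ) * ∑ S ∈ P, ((DS S)ᴴ * DS S).trace := by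
    rw [Finset.sum_congr rfl fun z _ => hone z, ← Finset.mul_sum, Finset.sum_comm]
    have h3 : ∀ S ∈ P, ∑ z, ∑ S' ∈ P,
        ((chi S z : ℂ) * (chi S' z : ℂ)) * ((DS S')ᴴ * DS S).trace
        = ((2:ℝ)^m : ℂ) * ((DS S)ᴴ * DS S).trace := by
      intro S hS
      rw [Finset.sum_comm]
      have h4 : ∀ S' ∈ P, ∑ z, ((chi S z : ℂ) * (chi S' z : ℂ)) * ((DS S')ᴴ * DS S).trace
          = (if S = S' then ((2:ℝ)^m : ℂ) else 0) * ((DS S')ᴴ * DS S).trace := by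
        intro S' _
        rw [← Finset.sum_mul]
        congr 1
        have : ∑ z, (chi S z : ℂ) * (chi S' z : ℂ)
            = ((∑ z, chi S z * chi S' z : ℝ) : ℂ) := by
          rw [Complex.ofReal_sum]
          exact Finset.sum_congr rfl fun z _ => by push_cast; ring
        rw [this, sum_chi_mul_chi S S']
        by_cases h : S = S' <;> simp [h]
      rw [Finset.sum_congr rfl h4]
      simp only [ite_mul, zero_mul]
      rw [Finset.sum_ite_eq P S (fun S' => ((2:ℝ)^m : ℂ) * ((DS S')ᴴ * DS S).trace)]
      simp [hS]
    rw [Finset.sum_congr rfl h3, ← Finset.mul_sum]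
    rw [← mul_assoc]
    congr 1
    have h2m : ((2:ℂ))^m ≠ 0 := by positivity
    push_cast
    field_simp
    all_goals ring
  have hpars : ∑ z, frobSq (Del z) = ((1 : ℝ) / 2 ^ m) * ∑ S ∈ P, frobSq (DS S) := by
    have hC : ((∑ z, frobSq (Del z) : ℝ) : ℂ)
        = (((1:ℝ)/2^m : ℝ) : ℂ) * ((∑ S ∈ P, frobSq (DS S) : ℝ) : ℂ) := by
      rw [Complex.ofReal_sum, Complex.ofReal_sum,
        Finset.sum_congr rfl fun z _ => frobSq_eq_trace (Del z),
        Finset.sum_congr rfl fun S _ => frobSq_eq_trace (DS S)]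
      exact htwo
    exact_mod_cast hC
  -- the key inequality
  have hNnonneg : ∀ S, 0 ≤ traceNorm (DS S) := fun S => traceNorm_nonneg _
  have hcardz : (Finset.univ : Finset (Fin m → Bool)).card = 2 ^ m := by
    rw [Finset.card_univ]
    simp [Fintype.card_fun]
  have hFN : ∀ S, frobSq (DS S) ≤ (traceNorm (DS S)) ^ 2 :=
    fun S => frobSq_le_sq_traceNorm _
  have hkey : (∑ z, traceNorm (Del z)) ^ 2
      ≤ (2 : ℝ) ^ (min d m) * ∑ S ∈ P, (traceNorm (DS S)) ^ 2 := by
    rcases le_total d m with hd | hm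
    · -- min = d : use Frobenius route
      rw [min_eq_left hd]
      have c1 : (∑ z, traceNorm (Del z)) ^ 2
          ≤ (2:ℝ)^m * ∑ z, (traceNorm (Del z)) ^ 2 := by
        have := sq_sum_le_card_mul_sum_sq (s := (Finset.univ : Finset (Fin m → Bool)))
          (f := fun z => traceNorm (Del z))
        rw [hcardz] at this
        exact_mod_cast this
      have c2 : ∀ z, (traceNorm (Del z)) ^ 2 ≤ (2:ℝ)^d * frobSq (Del z) := by
        intro z
        have := sq_traceNorm_le_card_mul_frobSq (Del z)
        rw [hE] at this
        exact_mod_cast this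
      have c3 : ∑ z, (traceNorm (Del z)) ^ 2 ≤ (2:ℝ)^d * ∑ z, frobSq (Del z) := by
        rw [Finset.mul_sum]
        exact Finset.sum_le_sum fun z _ => c2 z
      have c4 : (∑ z, traceNorm (Del z)) ^ 2
          ≤ (2:ℝ)^m * ((2:ℝ)^d * (((1:ℝ)/2^m) * ∑ S ∈ P, frobSq (DS S))) := by
        refine c1.trans ?_
        rw [← hpars]
        exact mul_le_mul_of_nonneg_left c3 (by positivity)
      have c5 : (2:ℝ)^m * ((2:ℝ)^d * (((1:ℝ)/2^m) * ∑ S ∈ P, frobSq (DS S)))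
          = (2:ℝ)^d * ∑ S ∈ P, frobSq (DS S) := by
        field_simp
        all_goals ring
      refine c4.trans_eq c5 |>.trans ?_
      exact mul_le_mul_of_nonneg_left (Finset.sum_le_sum fun S _ => hFN S) (by positivity)
    · -- min = m : use triangle-inequality route
      rw [min_eq_right hm]
      have t1 : ∀ z, traceNorm (Del z) ≤ ((1:ℝ)/2^m) * ∑ S ∈ P, traceNorm (DS S) := by
        intro z
        rw [hinv z, real_smul_matrix, traceNorm_smul]
        have habs : |(1:ℝ)/2^m| = (1:ℝ)/2^m := abs_of_nonneg (by positivity)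
        rw [habs]
        refine mul_le_mul_of_nonneg_left ?_ (by positivity)
        refine (traceNorm_sum_le P (fun S => (chi S z : ℂ) • DS S)
          (fun S _ => isHermitian_real_smul _ (hDSherm S))).trans ?_
        refine Finset.sum_le_sum fun S _ => ?_
        rw [traceNorm_smul, chi_abs, one_mul]
      have t2 : ∑ z, traceNorm (Del z) ≤ ∑ S ∈ P, traceNorm (DS S) := by
        calc ∑ z, traceNorm (Del z)
            ≤ ∑ _z : Fin m → Bool, ((1:ℝ)/2^m) * ∑ S ∈ P, traceNorm (DS S) :=
              Finset.sum_le_sum fun z _ => t1 z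
          _ = (2:ℝ)^m * (((1:ℝ)/2^m) * ∑ S ∈ P, traceNorm (DS S)) := by
              rw [Finset.sum_const, hcardz, nsmul_eq_mul]
              push_cast
              ring
          _ = ∑ S ∈ P, traceNorm (DS S) := by
              field_simp
      have t3 : (∑ S ∈ P, traceNorm (DS S)) ^ 2
          ≤ (2:ℝ)^m * ∑ S ∈ P, (traceNorm (DS S)) ^ 2 := by
        have hcs := sq_sum_le_card_mul_sum_sq (s := P) (f := fun S => traceNorm (DS S))
        have hcard : (P.card : ℝ) ≤ (2:ℝ)^m := by
          have h1 : P.card ≤ (Finset.univ : Finset (Fin m)).powerset.card :=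
            Finset.card_filter_le _ _
          have h2 : (Finset.univ : Finset (Fin m)).powerset.card = 2 ^ m := by
            rw [Finset.card_powerset, Finset.card_univ, Fintype.card_fin]
          calc (P.card : ℝ) ≤ ((2:ℕ)^m : ℕ) := by exact_mod_cast h2 ▸ h1
            _ = (2:ℝ)^m := by push_cast; ring
        refine hcs.trans ?_
        exact mul_le_mul_of_nonneg_right hcard
          (Finset.sum_nonneg fun S _ => sq_nonneg _)
      calc (∑ z, traceNorm (Del z)) ^ 2
          ≤ (∑ S ∈ P, traceNorm (DS S)) ^ 2 := by
            refine pow_le_pow_left₀ ?_ t2 2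
            exact Finset.sum_nonneg fun z _ => traceNorm_nonneg _
        _ ≤ (2:ℝ)^m * ∑ S ∈ P, (traceNorm (DS S)) ^ 2 := t3
  -- final assembly
  rw [hL]
  have hsum : ∀ S ∈ P, (traceNorm (cqMatrix (fun b : Bool =>
          ∑ z ∈ Finset.univ.filter (fun z => parS S z = b), ρ z)
        - cqMatrix (fun _ : Bool => ((1 : ℝ) / 2) • σ)) / 2) ^ 2
      = (traceNorm (DS S)) ^ 2 / 4 := by
    intro S _
    rw [hRS S, div_pow]
    norm_num
  rw [Finset.sum_congr rfl hsum, div_pow]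
  norm_num
  rw [← Finset.sum_div, ← mul_div_assoc]
  rw [div_le_div_iff_of_pos_right (by norm_num : (0:ℝ) < 4)]
  exact hkey
end
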